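/- arXiv:2202.04369 — 2 statements merged into one kernel-verified Lean document; each statement's English description precedes it below -/
import Mathlib

section
/- Let N be a natural number, let w : Fin N → ℝ be an antitone sequence with all values nonnegative, and let r : Fin N → ℝ be an antitone sequence. Then for every natural number m ≤ N and every injective function τ : Fin m → Fin N, the partial profit satisfies ∑_{k < m} w k * r (τ k) ≤ ∑_{k < m} w k * r k; that is, at every step m the greedy strategy of assigning the k-th highest-rate worker to the k-th highest-reward task is optimal among all ways of assigning the first m workers to m distinct tasks. -/
/-- Greedy partial optimality: for every `m ≤ N` and every injective assignment
`τ` of the first `m` workers to distinct tasks, the greedy diagonal assignment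
achieves at least as large a partial profit. -/
theorem greedy_partial_assignment_optimal (N : ℕ) (w r : Fin N → ℝ)
    (hw : Antitone w) (hw0 : ∀ i, 0 ≤ w i) (hr : Antitone r)
    (m : ℕ) (hm : m ≤ N) (τ : Fin m → Fin N) (hτ : Function.Injective τ) :
    ∑ k : Fin m, w (Fin.castLE hm k) * r (τ k) ≤
      ∑ k : Fin m, w (Fin.castLE hm k) * r (Fin.castLE hm k) := by
  classical
  set S : Finset (Fin N) := Finset.univ.image τ with hS
  have hcard : S.card = m := by
    rw [hS, Finset.card_image_of_injective _ hτ, Finset.card_univ, Fintype.card_fin]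
  set g : Fin m ↪o Fin N := S.orderEmbOfFin hcard with hg
  -- every τ k is in the range of g
  have hmem : ∀ k : Fin m, ∃ j : Fin m, g j = τ k := by
    intro k
    have hτk : τ k ∈ S := Finset.mem_image_of_mem _ (Finset.mem_univ k)
    have := Finset.range_orderEmbOfFin S hcard
    rw [← hg] at this
    have : τ k ∈ Set.range g := by rw [this]; exact hτk
    exact this
  choose σ hσ using hmem
  have hσinj : Function.Injective σ := by
    intro a b hab
    apply hτ
    rw [← hσ a, ← hσ b, hab]
  have hσbij : Function.Bijective σ := (Finite.injective_iff_bijective).mp hσinj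
  let e : Equiv.Perm (Fin m) := Equiv.ofBijective σ hσbij
  have he : ∀ k, e k = σ k := fun k => rfl
  -- monotonicity facts
  have hgmono : StrictMono g := g.strictMono
  have key : ∀ n : ℕ, ∀ h : n < m, n ≤ ((g ⟨n, h⟩ : Fin N) : ℕ) := by
    intro n
    induction n with
    | zero => intro h; exact Nat.zero_le _
    | succ j ih =>
      intro h
      have hj : j < m := Nat.lt_of_succ_lt h
      have h1 := ih hj
      have h2 : g ⟨j, hj⟩ < g ⟨j + 1, h⟩ := hgmono (by simp [Fin.lt_def])
      have h3 := Fin.lt_def.mp h2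
      omega
  have hle : ∀ k : Fin m, (Fin.castLE hm k) ≤ g k := by
    intro k
    have hk : (k : ℕ) ≤ ((g k : Fin N) : ℕ) := by simpa using key k k.isLt
    exact Fin.le_def.mpr (by simpa using hk)
  have hw' : Antitone (fun k : Fin m => w (Fin.castLE hm k)) := by
    intro a b hab
    exact hw (by exact_mod_cast hab)
  have hrg : Antitone (fun k : Fin m => r (g k)) := by
    intro a b hab
    exact hr (hgmono.monotone hab)
  have hmv : Monovary (fun k : Fin m => w (Fin.castLE hm k))
      (fun k : Fin m => r (g k)) := hw'.monovary hrg
  calc ∑ k : Fin m, w (Fin.castLE hm k) * r (τ k)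
      = ∑ k : Fin m, w (Fin.castLE hm k) * r (g (e k)) := by
        refine Finset.sum_congr rfl fun k _ => ?_
        rw [he, hσ]
    _ ≤ ∑ k : Fin m, w (Fin.castLE hm k) * r (g k) :=
        hmv.sum_mul_comp_perm_le_sum_mul (σ := e)
    _ ≤ ∑ k : Fin m, w (Fin.castLE hm k) * r (Fin.castLE hm k) := by
        refine Finset.sum_le_sum fun k _ => ?_
        exact mul_le_mul_of_nonneg_left (hr (hle k)) (hw0 _)
end

section
/- Let (Ω, ℱ, P) be a probability space, let W : Ω → ℕ be a measurable random variable (the stochastic capacity), let N be a natural number, and let r : Fin N → ℝ be an antitone sequence of task rewards (r 1 ≥ … ≥ r N). Then for every permutation π of Fin N, E[∑_{i=1}^{min(W(ω), N)} r_{π(i)}] ≤ E[∑_{i=1}^{min(W(ω), N)} r_i]; that is, ranking the tasks in decreasing order of reward maximizes the expected profit over all rankings when the first W ranked tasks (at most N) are processed. -/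
open MeasureTheory

lemma pointwise_rank_le (N : ℕ) (r : Fin N → ℝ) (hr : Antitone r)
    (π : Equiv.Perm (Fin N)) (m : ℕ) :
    ∑ i : Fin N, (if (i : ℕ) < m then r (π i) else 0) ≤
      ∑ i : Fin N, (if (i : ℕ) < m then r i else 0) := by
  set f : Fin N → ℝ := fun i => if (i : ℕ) < m then 1 else 0 with hf
  have hmono : Monovary f r := by
    intro i j hij
    have hji : j < i := by
      by_contra h
      exact absurd (hr (le_of_not_gt h)) (not_le.2 hij)
    simp only [hf]
    split_ifs with h1 h2 <;> norm_num
    · exact absurd (lt_trans (Fin.lt_def.mp hji) h1) h2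
  have := hmono.sum_mul_comp_perm_le_sum_mul (σ := π)
  have e1 : ∀ i : Fin N, f i * r (π i) = (if (i : ℕ) < m then r (π i) else 0) := by
    intro i; simp only [hf]; split_ifs <;> simp
  have e2 : ∀ i : Fin N, f i * r i = (if (i : ℕ) < m then r i else 0) := by
    intro i; simp only [hf]; split_ifs <;> simp
  simpa only [e1, e2] using this

/-- Ranking tasks in decreasing order of reward maximizes the expected profit
over all rankings, when the first `min (W ω) N` ranked tasks are processed
under stochastic capacity `W`. -/
theorem decreasing_ranking_maximizes_expected_profit
    {Ω : Type*} [MeasurableSpace Ω] (μ : Measure Ω) [IsProbabilityMeasure μ]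
    (W : Ω → ℕ) (hW : Measurable W) (N : ℕ) (r : Fin N → ℝ) (hr : Antitone r)
    (π : Equiv.Perm (Fin N)) :
    ∫ ω, ∑ i : Fin N, (if (i : ℕ) < min (W ω) N then r (π i) else 0) ∂μ ≤
      ∫ ω, ∑ i : Fin N, (if (i : ℕ) < min (W ω) N then r i else 0) ∂μ := by
  have hint : ∀ s : Fin N → ℝ, Integrable
      (fun ω => ∑ i : Fin N, (if (i : ℕ) < min (W ω) N then s i else 0)) μ := by
    intro s
    apply integrable_finset_sum
    intro i _
    have : (fun ω => if (i : ℕ) < min (W ω) N then s i else 0) =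
        Set.indicator {ω | (i : ℕ) < min (W ω) N} (fun _ => s i) := by
      ext ω; simp [Set.indicator_apply]
    rw [this]
    apply (integrable_const (s i)).indicator
    exact (measurableSet_lt measurable_const ((hW.min measurable_const)))
  exact integral_mono (hint _) (hint _) fun ω => pointwise_rank_le N r hr π _
end
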